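/- Let e₁ = (𝐢, -𝐢, -𝐢), e₂ = ((9/4)(𝐣-𝐤), (1/2)(𝐣+𝐤), 0), e₃ = ((9/4)(-𝐣+𝐤), 0, (1/2)(𝐣+𝐤)) in the Lie algebra 𝔰𝔩(2,ℝ)⊕𝔰𝔩(2,ℝ)⊕𝔰𝔩(2,ℝ) (with componentwise matrix commutator brackets). Then [e₁,e₂] = -2e₂, [e₁,e₃] = -2e₃, and [e₂,e₃] = 0, so the span of {e₁,e₂,e₃} is a 3-dimensional Lie subalgebra isomorphic to the Bianchi type V algebra. -/

import Mathlib

open Matrix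

abbrev M2 := Matrix (Fin 2) (Fin 2) ℝ

noncomputable def mi : M2 := !![1, 0; 0, -1]
noncomputable def mj : M2 := !![0, 1; 1, 0]
noncomputable def mk : M2 := !![0, 1; -1, 0]

/-- e₁ = (𝐢, -𝐢, -𝐢). -/
noncomputable def e₁ : M2 × M2 × M2 := (mi, -mi, -mi)
/-- e₂ = ((9/4)(𝐣-𝐤), (1/2)(𝐣+𝐤), 0). -/
noncomputable def e₂ : M2 × M2 × M2 := ((9/4 : ℝ) • (mj - mk), (1/2 : ℝ) • (mj + mk), 0)
/-- e₃ = ((9/4)(-𝐣+𝐤), 0, (1/2)(𝐣+𝐤)). -/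
noncomputable def e₃ : M2 × M2 × M2 := ((9/4 : ℝ) • (-mj + mk), 0, (1/2 : ℝ) • (mj + mk))

/-! In 𝔰𝔩(2,ℝ) one has [𝐢,𝐣] = 2𝐤 and [𝐢,𝐤] = 2𝐣, so 𝐣 - 𝐤 and 𝐣 + 𝐤 are eigenvectors of ad 𝐢
with eigenvalues -2 and 2; componentwise this gives [e₁,e₂] = -2e₂ and [e₁,e₃] = -2e₃. The first
components of e₂ and e₃ are opposite and their other components have disjoint supports, so
[e₂,e₃] = 0. The (0,0) entry of the first component and the (0,1) entries of the second and third
components are coordinates in which e₁, e₂, e₃ are the standard basis vectors. -/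

theorem Prod.mul_sub_mul {R S : Type*} [Ring R] [Ring S] (x y : R × S) :
    x * y - y * x = (x.1 * y.1 - y.1 * x.1, x.2 * y.2 - y.2 * x.2) := rfl

lemma mi_mul_mj : mi * mj = mk := by
  simp [mi, mj, mk]

lemma mj_mul_mi : mj * mi = -mk := by
  simp [mi, mj, mk]

lemma mi_mul_mk : mi * mk = mj := by
  simp [mi, mj, mk]

lemma mk_mul_mi : mk * mi = -mj := by
  simp [mi, mj, mk]

lemma mul_smul_sub_smul_mul {R A : Type*} [CommSemiring R] [Ring A] [Algebra R A] (c : R)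
    (x y : A) : x * (c • y) - (c • y) * x = c • (x * y - y * x) := by
  rw [mul_smul_comm, smul_mul_assoc, smul_sub]

lemma neg_mul_sub_mul_neg {A : Type*} [Ring A] (x y : A) : -x * y - y * -x = -(x * y - y * x) := by
  noncomm_ring

lemma mul_neg_sub_neg_mul {A : Type*} [Ring A] (x y : A) : x * -y - -y * x = -(x * y - y * x) := by
  noncomm_ring

lemma mi_commutator_mj_sub_mk : mi * (mj - mk) - (mj - mk) * mi = (-2 : ℝ) • (mj - mk) := by
  rw [mul_sub, sub_mul, mi_mul_mj, mj_mul_mi, mi_mul_mk, mk_mul_mi]; module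

lemma mi_commutator_mj_add_mk : mi * (mj + mk) - (mj + mk) * mi = (2 : ℝ) • (mj + mk) := by
  rw [mul_add, add_mul, mi_mul_mj, mj_mul_mi, mi_mul_mk, mk_mul_mi]; module

theorem linearIndependent_e₁_e₂_e₃ : LinearIndependent ℝ ![e₁, e₂, e₃] := by
  rw [Fintype.linearIndependent_iff]
  intro c hc
  have h₁ : c 0 = 0 := by
    simpa [Fin.sum_univ_three, e₁, e₂, e₃, mi, mj, mk] using congrArg (fun p => p.1 0 0) hc
  have h₂ : c 1 = 0 := by
    simpa [Fin.sum_univ_three, e₁, e₂, e₃, mi, mj, mk] using congrArg (fun p => p.2.1 0 1) hc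
  have h₃ : c 2 = 0 := by
    simpa [Fin.sum_univ_three, e₁, e₂, e₃, mi, mj, mk] using congrArg (fun p => p.2.2 0 1) hc
  intro i; fin_cases i <;> assumption

theorem stmt_14 :
    -- componentwise commutator brackets:
    e₁ * e₂ - e₂ * e₁ = (-2 : ℝ) • e₂ ∧
    e₁ * e₃ - e₃ * e₁ = (-2 : ℝ) • e₃ ∧
    e₂ * e₃ - e₃ * e₂ = 0 ∧
    -- {e₁,e₂,e₃} spans a 3-dimensional (Bianchi type V) Lie subalgebra:
    LinearIndependent ℝ ![e₁, e₂, e₃] := by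
  have hk : -mj + mk = -(mj - mk) := by abel
  refine ⟨?_, ?_, ?_, linearIndependent_e₁_e₂_e₃⟩ <;>
  simp only [Prod.mul_sub_mul, e₁, e₂, e₃, hk, Prod.smul_mk, Prod.mk.injEq, Prod.mk_eq_zero,
    smul_neg, smul_zero, neg_mul_sub_mul_neg, mul_neg_sub_neg_mul, mul_smul_sub_smul_mul,
    mi_commutator_mj_sub_mk, mi_commutator_mj_add_mk, mul_zero, zero_mul, sub_self, neg_zero,
    and_true, true_and]
  all_goals exact ⟨by module, by module⟩
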